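/- Law of large numbers for ⊞^t: let t ∈ ℝ \ ℤ_{≥0} and let A ∈ U = 1 + zℝ⟦z⟧ satisfy κ_1^t(A) = λ. Then D_{1/m}[A^{⊞^t m}] → B_λ^{(t)} as m → ∞, in the sense that for every n ≥ 0 the n-th coefficient of D_{1/m}[A^{⊞^t m}] converges to the n-th coefficient of B_λ^{(t)}. -/

import Mathlib

open PowerSeries Finset

/-- Falling factorial `(t)_k = t (t-1) ⋯ (t-k+1)`. -/
noncomputable def ffall (t : ℝ) (k : ℕ) : ℝ := ∏ i ∈ Finset.range k, (t - i)

/-- The `t`-deformed convolution of formal power series. -/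
noncomputable def tconv (t : ℝ) (A B : PowerSeries ℝ) : PowerSeries ℝ :=
  PowerSeries.mk fun k => ∑ p ∈ Finset.HasAntidiagonal.antidiagonal k,
    ffall t k / (ffall t p.1 * ffall t p.2)
      * (PowerSeries.coeff p.1 A) * (PowerSeries.coeff p.2 B)

/-- Formal logarithm of a power series (with constant term 1):
`log A = - Σ_{k ≥ 1} (1 - A)^k / k`. -/
noncomputable def flog (A : PowerSeries ℝ) : PowerSeries ℝ :=
  PowerSeries.mk fun n =>
    -∑ k ∈ Finset.range (n + 1), (PowerSeries.coeff n ((1 - A) ^ k) : ℝ) / k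

/-- Power sums of `A ∈ 1 + zℝ⟦z⟧`, defined by `Σ p_k(A) z^k = -z (d/dz) log A(z)`. -/
noncomputable def powSum (A : PowerSeries ℝ) (k : ℕ) : ℝ :=
  -(k : ℝ) * PowerSeries.coeff k (flog A)

/-- `E^t[A](z) = Σ_k (t^k/(t)_k) a_k z^k`. -/
noncomputable def Et (t : ℝ) (A : PowerSeries ℝ) : PowerSeries ℝ :=
  PowerSeries.mk fun k => t ^ k / ffall t k * PowerSeries.coeff k A

/-- The `t`-deformed cumulant transform `C^t[A](z) = -(z/t)(d/dz) log(E^t[A](z))`. -/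
noncomputable def Ct (t : ℝ) (A : PowerSeries ℝ) : PowerSeries ℝ :=
  PowerSeries.mk fun n => -(1 / t) * ((n : ℝ) * PowerSeries.coeff n (flog (Et t A)))

/-- The `i`-th `t`-deformed cumulant of `A`. -/
noncomputable def kappa (t : ℝ) (A : PowerSeries ℝ) (i : ℕ) : ℝ :=
  PowerSeries.coeff i (Ct t A)

/-- The `m`-fold `⊞^t`-convolution power `A^{⊞^t m}`. -/
noncomputable def convPow (t : ℝ) (A : PowerSeries ℝ) : ℕ → PowerSeries ℝ
  | 0 => 1
  | n + 1 => tconv t A (convPow t A n)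

/-- The `t`-deformed binomial series `B_λ^{(t)}(z) = (1-λz)^t`. -/
noncomputable def Bt (t lam : ℝ) : PowerSeries ℝ :=
  PowerSeries.mk fun k => (-1) ^ k * ffall t k / (k.factorial : ℝ) * lam ^ k

/-! Dividing the `k`-th coefficient by `(t)_k` turns `⊞^t` into the ordinary product of power
series. Hence, with `G := Σ_k (a_k / (t)_k) z^k - 1`, which has no constant term, the `n`-th
coefficient of `A^{⊞^t m}` is `(t)_n [z^n] (1 + G)^m = (t)_n Σ_{j ≤ n} C(m, j) [z^n] G^j`.
After dividing by `m^n` only the term `j = n` survives as `m → ∞`, and it tends to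
`(t)_n g_1^n / n!`, where `g_1 = a_1 / t = -κ_1^t(A)`. -/

open Filter Asymptotics Topology

theorem tendsto_choose_div_pow_self (n : ℕ) :
    Tendsto (fun m : ℕ => (m.choose n : ℝ) / (m : ℝ) ^ n) atTop (𝓝 (n.factorial : ℝ)⁻¹) := by
  have h := (isEquivalent_choose n).div (IsEquivalent.refl (u := fun m : ℕ => (m : ℝ) ^ n))
  refine h.symm.tendsto_nhds (tendsto_const_nhds.congr' ?_)
  filter_upwards [eventually_ge_atTop 1] with m hm
  have : (m : ℝ) ≠ 0 := by positivity
  simp only [Pi.div_apply]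
  field_simp

theorem tendsto_choose_div_pow_of_lt {j n : ℕ} (h : j < n) :
    Tendsto (fun m : ℕ => (m.choose j : ℝ) / (m : ℝ) ^ n) atTop (𝓝 0) :=
  IsLittleO.tendsto_div_nhds_zero <| (isTheta_choose j).isBigO.trans_isLittleO <|
    (isLittleO_pow_pow_atTop_of_lt h).comp_tendsto tendsto_natCast_atTop_atTop

namespace PowerSeries

variable {R : Type*} [CommSemiring R] {G : PowerSeries R}

theorem coeff_pow_eq_zero_of_lt (hG : constantCoeff G = 0) {n j : ℕ} (h : n < j) :
    coeff n (G ^ j) = 0 :=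
  X_pow_dvd_iff.1 (pow_dvd_pow_of_dvd (X_dvd_iff.2 hG) j) n h

theorem coeff_pow_self (hG : constantCoeff G = 0) (n : ℕ) :
    coeff n (G ^ n) = coeff 1 G ^ n := by
  obtain ⟨H, rfl⟩ := X_dvd_iff.2 hG
  simpa [mul_pow] using coeff_X_pow_mul' (H ^ n) n n

theorem coeff_one_add_pow (hG : constantCoeff G = 0) (n m : ℕ) :
    coeff n ((1 + G) ^ m) = ∑ j ∈ range (n + 1), (m.choose j : R) * coeff n (G ^ j) := by
  have hterm (j : ℕ) : coeff n (G ^ j * 1 ^ (m - j) * (m.choose j : R⟦X⟧))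
      = (m.choose j : R) * coeff n (G ^ j) := by
    rw [one_pow, mul_one, ← map_natCast (C (R := R)), coeff_mul_C, mul_comm]
  rw [add_comm, add_pow, map_sum]
  simp only [hterm]
  rw [sum_subset (range_subset_range.2 (by omega : m + 1 ≤ m + n + 1)) fun j _ hj => by
      rw [Nat.choose_eq_zero_of_lt (by simpa using hj), Nat.cast_zero, zero_mul],
    ← sum_subset (range_subset_range.2 (by omega : n + 1 ≤ m + n + 1)) fun j _ hj => by
      rw [coeff_pow_eq_zero_of_lt hG (by simpa using hj), mul_zero]]

theorem tendsto_coeff_one_add_pow_div_pow {G : ℝ⟦X⟧} (hG : constantCoeff G = 0) (n : ℕ) :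
    Tendsto (fun m : ℕ => coeff n ((1 + G) ^ m) / (m : ℝ) ^ n) atTop
      (𝓝 (coeff 1 G ^ n / n.factorial)) := by
  have hsplit : (fun m : ℕ => coeff n ((1 + G) ^ m) / (m : ℝ) ^ n) = fun m : ℕ =>
      ∑ j ∈ range n, coeff n (G ^ j) * ((m.choose j : ℝ) / (m : ℝ) ^ n)
        + coeff n (G ^ n) * ((m.choose n : ℝ) / (m : ℝ) ^ n) := by
    funext m
    rw [coeff_one_add_pow hG, sum_range_succ, add_div, sum_div]
    congr 1
    · exact sum_congr rfl fun j _ => by ring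
    · ring
  rw [hsplit, ← coeff_pow_self hG, div_eq_mul_inv]
  convert (tendsto_finsetSum (range n) fun j hj =>
    (tendsto_choose_div_pow_of_lt (mem_range.1 hj)).const_mul (coeff n (G ^ j))).add
      ((tendsto_choose_div_pow_self n).const_mul (coeff n (G ^ n)))
  simp

end PowerSeries

noncomputable def divFfall (t : ℝ) (A : ℝ⟦X⟧) : ℝ⟦X⟧ :=
  mk fun k => coeff k A / ffall t k

section

variable {t : ℝ} {A B : ℝ⟦X⟧}

theorem ffall_ne_zero (ht : ∀ n : ℕ, t ≠ n) (k : ℕ) : ffall t k ≠ 0 :=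
  prod_ne_zero_iff.2 fun i _ => sub_ne_zero.2 (ht i)

@[simp]
theorem ffall_zero : ffall t 0 = 1 := prod_range_zero _

@[simp]
theorem ffall_one : ffall t 1 = t := by simp [ffall]

@[simp]
theorem coeff_divFfall (k : ℕ) : coeff k (divFfall t A) = coeff k A / ffall t k :=
  coeff_mk _ _

@[simp]
theorem constantCoeff_divFfall : constantCoeff (divFfall t A) = constantCoeff A := by
  rw [← coeff_zero_eq_constantCoeff_apply, coeff_divFfall, ffall_zero, div_one,
    coeff_zero_eq_constantCoeff_apply]

theorem divFfall_one : divFfall t 1 = 1 := by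
  ext k
  rcases k with _ | k <;> simp [coeff_one]

theorem divFfall_tconv (hff : ∀ k, ffall t k ≠ 0) :
    divFfall t (tconv t A B) = divFfall t A * divFfall t B := by
  ext k
  simp only [coeff_divFfall, tconv, coeff_mk, coeff_mul, sum_div]
  refine sum_congr rfl fun p _ => ?_
  field_simp [hff k, hff p.1, hff p.2]

theorem divFfall_convPow (hff : ∀ k, ffall t k ≠ 0) (m : ℕ) :
    divFfall t (convPow t A m) = divFfall t A ^ m := by
  induction m with
  | zero => exact divFfall_one
  | succ m ih => rw [convPow, divFfall_tconv hff, ih, pow_succ']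

theorem coeff_eq_ffall_mul_coeff_divFfall {n : ℕ} (h : ffall t n ≠ 0) :
    coeff n A = ffall t n * coeff n (divFfall t A) := by
  rw [divFfall, coeff_mk, mul_div_cancel₀ _ h]

theorem kappa_one (ht : t ≠ 0) : kappa t A 1 = -coeff 1 A / t := by
  simp [kappa, Ct, flog, Et, sum_range_succ, coeff_one, ht, div_eq_inv_mul]

end

/-- Law of large numbers for `⊞^t`: if `A ∈ U` has `κ_1^t(A) = λ`, then
`D_{1/m}[A^{⊞^t m}] → B_λ^{(t)}` coefficientwise as `m → ∞`. -/
theorem lln_tconv (t : ℝ) (ht : ∀ n : ℕ, t ≠ (n : ℝ))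
    (A : PowerSeries ℝ) (hA : PowerSeries.constantCoeff A = 1)
    (lam : ℝ) (hkappa : kappa t A 1 = lam) (n : ℕ) :
    Filter.Tendsto
      (fun m : ℕ =>
        PowerSeries.coeff n (PowerSeries.rescale (1 / (m : ℝ)) (convPow t A m)))
      Filter.atTop (nhds (PowerSeries.coeff n (Bt t lam))) := by
  have hff := ffall_ne_zero ht
  set G := divFfall t A - 1
  have hG0 : constantCoeff G = 0 := by simp [G, hA]
  have hG1 : coeff 1 G = -lam := by
    have ht0 : t ≠ 0 := by simpa using ht 0
    simp [G, ← hkappa, kappa_one ht0, neg_div]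
  convert (tendsto_coeff_one_add_pow_div_pow hG0 n).const_mul (ffall t n) using 2 with m
  · rw [coeff_rescale, coeff_eq_ffall_mul_coeff_divFfall (hff n), divFfall_convPow hff,
      add_sub_cancel]
    ring
  · rw [Bt, coeff_mk, hG1, neg_pow]
    ring
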